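/- Let H be a strategic game and assume property D(ω) holds, where ω is the first infinite ordinal. Then every ω-outcome of every relaxation of LS̄ equals GS̄^ω: if R is a relaxation of LS̄ with R^{ω+1} = R^ω, then R^ω = GS̄^ω. In particular any two ω-outcomes of relaxations of LS̄ coincide, i.e., LS̄ is DS-order independent. -/

import Mathlib

universe u

/-- Transfinite iterations of an operator on a complete lattice:
`F^0 = ⊤`, `F^(α+1) = F (F^α)`, and `F^β = ⨅_{α<β} F^α` for limit `β`. -/
noncomputable def iterate {D : Type u} [CompleteLattice D] (F : D → D) (α : Ordinal.{0}) : D :=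
  Ordinal.limitRecOn α ⊤ (fun _ ih => F ih) (fun β _ ih => ⨅ (γ : Ordinal) (h : γ < β), ih γ h)

/-- `R` is a relaxation of `F`. -/
def Relaxation {D : Type u} [CompleteLattice D] (F R : D → D) : Prop :=
  ∀ α : Ordinal.{0},
    F (iterate R α) ≤ R (iterate R α) ∧
    (F (iterate R α) ≤ iterate R α → R (iterate R α) ≤ iterate R α) ∧
    (R (iterate R α) = iterate R α → F (iterate R α) = iterate R α)

section Games

variable {n : ℕ} {T : Fin n → Type u}

/-- `GR` operator: strategies that are a best response *in the initial game* to
some opponent belief held in `G`. -/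
def GR (p : ∀ i : Fin n, (∀ j, T j) → ℝ) (G : ∀ i, Set (T i)) : ∀ i, Set (T i) :=
  fun i => {s : T i | ∃ μ : ∀ j, T j, (∀ j, j ≠ i → μ j ∈ G j) ∧
    ∀ s' : T i, p i (Function.update μ i s') ≤ p i (Function.update μ i s)}

/-- `LR` operator: strategies that are a best response *in `G`* to
some opponent belief held in `G`. -/
def LR (p : ∀ i : Fin n, (∀ j, T j) → ℝ) (G : ∀ i, Set (T i)) : ∀ i, Set (T i) :=
  fun i => {s : T i | ∃ μ : ∀ j, T j, (∀ j, j ≠ i → μ j ∈ G j) ∧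
    ∀ s' ∈ G i, p i (Function.update μ i s') ≤ p i (Function.update μ i s)}

/-- `s'` strictly dominates `s` on the restriction `G`. -/
def Dom (p : ∀ i : Fin n, (∀ j, T j) → ℝ) (G : ∀ i, Set (T i)) (i : Fin n)
    (s' s : T i) : Prop :=
  ∀ μ : ∀ j, T j, (∀ j, j ≠ i → μ j ∈ G j) →
    p i (Function.update μ i s) < p i (Function.update μ i s')

/-- `GS` operator: strategies not strictly dominated on `G` by any strategy of the initial game. -/
def GS (p : ∀ i : Fin n, (∀ j, T j) → ℝ) (G : ∀ i, Set (T i)) : ∀ i, Set (T i) :=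
  fun i => {s : T i | ¬ ∃ s' : T i, Dom p G i s' s}

/-- `LS` operator: strategies not strictly dominated on `G` by any strategy in `G`. -/
def LS (p : ∀ i : Fin n, (∀ j, T j) → ℝ) (G : ∀ i, Set (T i)) : ∀ i, Set (T i) :=
  fun i => {s : T i | ¬ ∃ s' ∈ G i, Dom p G i s' s}

/-- Property B: to each belief in the initial game a best response (in the initial game) exists. -/
def PropB (p : ∀ i : Fin n, (∀ j, T j) → ℝ) : Prop :=
  ∀ (i : Fin n) (μ : ∀ j, T j), ∃ s : T i, ∀ s' : T i,
    p i (Function.update μ i s') ≤ p i (Function.update μ i s)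

/-- Property D(α). -/
def PropD (p : ∀ i : Fin n, (∀ j, T j) → ℝ) (α : Ordinal.{0}) : Prop :=
  ∀ R : (∀ i, Set (T i)) → (∀ i, Set (T i)), Relaxation (fun G => LS p G ⊓ G) R →
    ∀ (i : Fin n) (s : T i), (∃ s' : T i, Dom p (iterate R α) i s' s) →
      ∃ s' ∈ iterate R α i, Dom p (iterate R α) i s' s

/-- Property C(α). -/
def PropC (p : ∀ i : Fin n, (∀ j, T j) → ℝ) (α : Ordinal.{0}) : Prop :=
  ∀ R : (∀ i, Set (T i)) → (∀ i, Set (T i)), Relaxation (fun G => LS p G ⊓ G) R →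
    ∀ (i : Fin n) (s : T i), (∃ s' : T i, Dom p (iterate R α) i s' s) →
      ∃ s'' : T i, Dom p (iterate R α) i s'' s ∧ ¬ ∃ s' : T i, Dom p (iterate R α) i s' s''

end Games

set_option linter.unusedVariables false

/-!
`GS̄` is monotone and below `LS̄`, hence below any relaxation `R` of `LS̄` along the iterates of
`R`, so `GS̄^α ≤ R^α` for every `α`. Conversely, a fixpoint `R^ω` of `R` is a fixpoint of `LS̄`,
and `D(ω)` turns every dominance on `R^ω` into one by a strategy of `R^ω`, so `R^ω` is also a
fixpoint of `GS̄`. A post-fixpoint of a monotone operator lies below all of its iterates, so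
`R^ω ≤ GS̄^ω`.
-/

section Iterate

variable {D : Type u} [CompleteLattice D]

@[simp]
theorem iterate_zero (F : D → D) : iterate F 0 = ⊤ :=
  Ordinal.limitRecOn_zero _ _ _

theorem iterate_add_one (F : D → D) (α : Ordinal.{0}) : iterate F (α + 1) = F (iterate F α) :=
  Ordinal.limitRecOn_add_one _ _ _ _

theorem iterate_of_isSuccLimit (F : D → D) {β : Ordinal.{0}} (hβ : Order.IsSuccLimit β) :
    iterate F β = ⨅ (γ : Ordinal) (_ : γ < β), iterate F γ :=
  Ordinal.limitRecOn_limit _ _ _ _ hβ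

theorem iterate_le_iterate {F R : D → D} (hF : Monotone F)
    (h : ∀ α, F (iterate R α) ≤ R (iterate R α)) (α : Ordinal.{0}) :
    iterate F α ≤ iterate R α := by
  induction α using Ordinal.limitRecOn with
  | zero => simp
  | add_one α ih =>
    rw [iterate_add_one, iterate_add_one]
    exact (hF ih).trans (h α)
  | limit β hβ ih =>
    rw [iterate_of_isSuccLimit F hβ, iterate_of_isSuccLimit R hβ]
    exact iInf₂_mono ih

theorem le_iterate_of_le_apply {F : D → D} (hF : Monotone F) {x : D} (hx : x ≤ F x)
    (α : Ordinal.{0}) : x ≤ iterate F α := by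
  induction α using Ordinal.limitRecOn with
  | zero => simp
  | add_one α ih => exact hx.trans (iterate_add_one F α ▸ hF ih)
  | limit β hβ ih =>
    rw [iterate_of_isSuccLimit F hβ]
    exact le_iInf₂ ih

theorem iterate_eq_of_isFixedPt {F R : D → D} (hF : Monotone F)
    (h : ∀ α, F (iterate R α) ≤ R (iterate R α)) {α : Ordinal.{0}}
    (hfix : Function.IsFixedPt F (iterate R α)) : iterate R α = iterate F α :=
  le_antisymm (le_iterate_of_le_apply hF hfix.ge α) (iterate_le_iterate hF h α)

end Iterate

section Games

variable {n : ℕ} {T : Fin n → Type u} (p : ∀ i : Fin n, (∀ j, T j) → ℝ)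

theorem Dom.anti {G G' : ∀ i, Set (T i)} (hG : G ≤ G') {i : Fin n} {s' s : T i}
    (hd : Dom p G' i s' s) : Dom p G i s' s :=
  fun μ hμ => hd μ fun j hj => hG j (hμ j hj)

theorem monotone_GS_inf : Monotone fun G : ∀ i, Set (T i) => GS p G ⊓ G :=
  fun _ _ hG i _ ⟨hs, hsG⟩ =>
    ⟨fun ⟨s', hd⟩ => hs ⟨s', Dom.anti p hG hd⟩, hG i hsG⟩

theorem GS_inf_le_LS_inf (G : ∀ i, Set (T i)) : GS p G ⊓ G ≤ LS p G ⊓ G :=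
  fun _ _ ⟨hs, hsG⟩ => ⟨fun ⟨s', _, hd⟩ => hs ⟨s', hd⟩, hsG⟩

theorem GS_inf_eq_self {G : ∀ i, Set (T i)} (hLS : LS p G ⊓ G = G)
    (hdom : ∀ i (s : T i), (∃ s', Dom p G i s' s) → ∃ s' ∈ G i, Dom p G i s' s) :
    GS p G ⊓ G = G := by
  refine le_antisymm inf_le_right fun i s hs => ⟨fun hdominated => ?_, hs⟩
  rw [← hLS] at hs
  exact hs.1 (hdom i s hdominated)

end Games

theorem stmt_19_general {n : ℕ} {T : Fin n → Type u}
    (p : ∀ i : Fin n, (∀ j, T j) → ℝ) (hD : PropD p Ordinal.omega0) :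
    ∀ R, Relaxation (fun G => LS p G ⊓ G) R →
      iterate R (Ordinal.omega0 + 1) = iterate R Ordinal.omega0 →
        iterate R Ordinal.omega0 = iterate (fun G => GS p G ⊓ G) Ordinal.omega0 := by
  intro R hR hfix
  have hR_fix : R (iterate R Ordinal.omega0) = iterate R Ordinal.omega0 :=
    (iterate_add_one R _).symm.trans hfix
  have hLS_fix := (hR Ordinal.omega0).2.2 hR_fix
  exact iterate_eq_of_isFixedPt (monotone_GS_inf p)
    (fun α => (GS_inf_le_LS_inf p _).trans (hR α).1) (GS_inf_eq_self p hLS_fix (hD R hR))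

theorem stmt_19 {n : ℕ} (hn : 2 ≤ n) {T : Fin n → Type u} [∀ i, Nonempty (T i)]
    (p : ∀ i : Fin n, (∀ j, T j) → ℝ) (hD : PropD p Ordinal.omega0) :
    ∀ R, Relaxation (fun G => LS p G ⊓ G) R →
      iterate R (Ordinal.omega0 + 1) = iterate R Ordinal.omega0 →
        iterate R Ordinal.omega0 = iterate (fun G => GS p G ⊓ G) Ordinal.omega0 :=
  stmt_19_general p hD
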